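/- arXiv:2603.22237 — 7 statements merged into one kernel-verified Lean document; each statement's English description precedes it below -/
import Mathlib

section
/- Let Z be an n×n positive definite similarity matrix and let α ≥ 2 be real. For all p, q ∈ Δ_n°, the structure-aware divergence d_α^Z(p‖q) equals the Bregman divergence of the negative structure-aware entropy φ = −H_α^Z: that is, d_α^Z(p‖q) = −H_α^Z(p) + H_α^Z(q) + Σ_k (∂_k H_α^Z)(q) · (p_k − q_k), where (∂_k H_α^Z)(q) = −(1/(α−1))((Zq)_k)^{α−1} − Σ_i Z_ki ((Zq)_i)^{α−2} q_i is the k-th partial derivative of H_α^Z at q. -/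
open Matrix Finset

/-- `Z` is a similarity matrix: entries in `[0,1]`, symmetric, unit diagonal. -/
def IsSimilarityMatrix {n : ℕ} (Z : Matrix (Fin n) (Fin n) ℝ) : Prop :=
  (∀ i j, 0 ≤ Z i j ∧ Z i j ≤ 1) ∧ Zᵀ = Z ∧ (∀ i, Z i i = 1)

/-- `Z` is positive definite: `xᵀ Z x > 0` for every nonzero `x`. -/
def IsPosDefMat {n : ℕ} (Z : Matrix (Fin n) (Fin n) ℝ) : Prop :=
  ∀ x : Fin n → ℝ, x ≠ 0 → 0 < x ⬝ᵥ Z.mulVec x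

/-- The relative interior `Δₙ°` of the probability simplex. -/
def simplexInterior (n : ℕ) : Set (Fin n → ℝ) :=
  {p | (∑ i, p i) = 1 ∧ ∀ i, 0 < p i}

/-- Structure-aware Havrda–Charvát entropy of order `α`. -/
noncomputable def Hent {n : ℕ} (Z : Matrix (Fin n) (Fin n) ℝ) (α : ℝ) (p : Fin n → ℝ) : ℝ :=
  if α = 1 then -∑ i, p i * Real.log (Z.mulVec p i)
  else (1 / (α - 1)) * (1 - ∑ i, p i * (Z.mulVec p i) ^ (α - 1))

/-- Structure-aware divergence of order `α` of `p` from `q`. -/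
noncomputable def saDiv {n : ℕ} (Z : Matrix (Fin n) (Fin n) ℝ) (α : ℝ) (p q : Fin n → ℝ) : ℝ :=
  (1 / (α - 1)) * ∑ i, p i * ((Z.mulVec p i) ^ (α - 1) - (Z.mulVec q i) ^ (α - 1))
    - ∑ i, q i * (Z.mulVec q i) ^ (α - 2) * (Z.mulVec (p - q) i)

/-- the structure-aware divergence is the Bregman divergence of the
negative structure-aware entropy. -/
theorem saDiv_eq_bregman {n : ℕ} (Z : Matrix (Fin n) (Fin n) ℝ)
    (hZ : IsSimilarityMatrix Z) (hpd : IsPosDefMat Z) (α : ℝ) (hα : 2 ≤ α)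
    (p q : Fin n → ℝ) (hp : p ∈ simplexInterior n) (hq : q ∈ simplexInterior n) :
    saDiv Z α p q
      = -(Hent Z α p) + Hent Z α q
        + ∑ k, (-(1 / (α - 1)) * (Z.mulVec q k) ^ (α - 1)
            - ∑ i, Z k i * (Z.mulVec q i) ^ (α - 2) * q i) * (p k - q k) := by
  have hα1 : α ≠ 1 := by linarith
  have hsym : ∀ i k, Z i k = Z k i := fun i k => congrFun (congrFun hZ.2.1 k) i
  simp only [saDiv, Hent, if_neg hα1]
  have hdouble : ∑ k, (∑ i, Z k i * (Z.mulVec q i) ^ (α - 2) * q i) * (p k - q k)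
      = ∑ i, q i * (Z.mulVec q i) ^ (α - 2) * (Z.mulVec (p - q) i) := by
    calc ∑ k, (∑ i, Z k i * (Z.mulVec q i) ^ (α - 2) * q i) * (p k - q k)
        = ∑ k, ∑ i, Z k i * (Z.mulVec q i) ^ (α - 2) * q i * (p k - q k) := by
          simp [Finset.sum_mul]
      _ = ∑ i, ∑ k, Z k i * (Z.mulVec q i) ^ (α - 2) * q i * (p k - q k) := Finset.sum_comm
      _ = ∑ i, q i * (Z.mulVec q i) ^ (α - 2) * (Z.mulVec (p - q) i) := by
          refine Finset.sum_congr rfl fun i _ => ?_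
          simp only [Matrix.mulVec, dotProduct, Pi.sub_apply, Finset.mul_sum]
          refine Finset.sum_congr rfl fun k _ => ?_
          rw [hsym i k]; ring
  have hsplit : ∑ k, (-(1 / (α - 1)) * (Z.mulVec q k) ^ (α - 1)
        - ∑ i, Z k i * (Z.mulVec q i) ^ (α - 2) * q i) * (p k - q k)
      = ∑ k, (-(1 / (α - 1)) * (Z.mulVec q k) ^ (α - 1)) * (p k - q k)
        - ∑ i, q i * (Z.mulVec q i) ^ (α - 2) * (Z.mulVec (p - q) i) := by
    rw [← hdouble, ← Finset.sum_sub_distrib]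
    exact Finset.sum_congr rfl fun k _ => by ring
  rw [hsplit]
  have e1 : ∑ i, p i * ((Z.mulVec p i) ^ (α - 1) - (Z.mulVec q i) ^ (α - 1))
      = ∑ i, p i * (Z.mulVec p i) ^ (α - 1) - ∑ i, p i * (Z.mulVec q i) ^ (α - 1) := by
    rw [← Finset.sum_sub_distrib]; exact Finset.sum_congr rfl fun i _ => by ring
  have e2 : ∑ k, (-(1 / (α - 1)) * (Z.mulVec q k) ^ (α - 1)) * (p k - q k)
      = -(1 / (α - 1)) * (∑ i, p i * (Z.mulVec q i) ^ (α - 1)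
          - ∑ i, q i * (Z.mulVec q i) ^ (α - 1)) := by
    rw [← Finset.sum_sub_distrib, Finset.mul_sum]
    exact Finset.sum_congr rfl fun k _ => by ring
  rw [e1, e2]; ring
end

section
/- Let Z be an n×n positive definite similarity matrix, α ≥ 2 real, m ≥ 1, weights w ∈ Δ_m with all w_a > 0, and distributions p^1, …, p^m ∈ Δ_n°. Let C_1, …, C_k be a partition of the index set {1,…,m}, let W_c = Σ_{a ∈ C_c} w_a, and let μ_c = (1/W_c) Σ_{a ∈ C_c} w_a p^a be the cluster means. Then the total Bregman information decomposes as the between-cluster plus within-cluster informations: I_α^Z((p^a)_{a=1..m}; w) = I_α^Z((μ_c)_{c=1..k}; (W_c)_{c=1..k}) + Σ_{c=1}^k W_c · I_α^Z((p^a)_{a ∈ C_c}; (w_a/W_c)_{a ∈ C_c}). -/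
open Matrix Finset

/-!
`saDiv Z α` is the Bregman divergence `φ p - φ q - ⟪g q, p - q⟫` of the potential
`φ p = (1/(α-1)) ∑ pᵢ (Zp)ᵢ^(α-1)`. For any Bregman
divergence, the excess `∑ wₐ D(xₐ, q) - W D(μ, q)` of a weighted family over its mean `μ`
is `∑ wₐ φ(xₐ) - W φ(μ)`, independent of `q`; evaluating it at `q = μ` identifies it with the
within-family information `∑ wₐ D(xₐ, μ)`. Summing this over the clusters, with `q` the global
mean, gives the decomposition.
-/

/-- `L q` plays the role of the derivative of `φ` at `q`. -/
def bregmanDiv {R E : Type*} [CommRing R] [AddCommGroup E] [Module R E]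
    (φ : E → R) (L : E → E →ₗ[R] R) (p q : E) : R :=
  φ p - φ q - L q (p - q)

section Bregman

variable {ι R E : Type*} [CommRing R] [AddCommGroup E] [Module R E]
  (φ : E → R) (L : E → E →ₗ[R] R) {s : Finset ι} {w : ι → R} {x : ι → E} {μ : E}

theorem sum_mul_bregmanDiv (hμ : (∑ a ∈ s, w a) • μ = ∑ a ∈ s, w a • x a) (q : E) :
    ∑ a ∈ s, w a * bregmanDiv φ L (x a) q
      = ∑ a ∈ s, w a * φ (x a) - (∑ a ∈ s, w a) * (φ q + L q (μ - q)) := by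
  have hlin : ∑ a ∈ s, w a * L q (x a - q) = (∑ a ∈ s, w a) * L q (μ - q) := by
    simp only [← smul_eq_mul, ← map_smul, ← map_sum, smul_sub, sum_sub_distrib, ← hμ, ← sum_smul]
  simp only [bregmanDiv, mul_sub, sum_sub_distrib, ← sum_mul, hlin]
  ring

theorem sum_mul_bregmanDiv_eq_add (hμ : (∑ a ∈ s, w a) • μ = ∑ a ∈ s, w a • x a) (q : E) :
    ∑ a ∈ s, w a * bregmanDiv φ L (x a) q
      = (∑ a ∈ s, w a) * bregmanDiv φ L μ q + ∑ a ∈ s, w a * bregmanDiv φ L (x a) μ := by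
  rw [sum_mul_bregmanDiv φ L hμ, sum_mul_bregmanDiv φ L hμ, bregmanDiv]
  simp only [sub_self, map_zero]
  ring

end Bregman

section StructureAware

variable {n : ℕ} (Z : Matrix (Fin n) (Fin n) ℝ) (α : ℝ)

noncomputable def saPotential (p : Fin n → ℝ) : ℝ :=
  (1 / (α - 1)) * ∑ i, p i * (Z *ᵥ p) i ^ (α - 1)

/-- For symmetric `Z` this is the gradient of `saPotential Z α` at `q`. -/
noncomputable def saGradient (q : Fin n → ℝ) : Fin n → ℝ :=
  (1 / (α - 1)) • (fun i => (Z *ᵥ q) i ^ (α - 1)) + (fun i => q i * (Z *ᵥ q) i ^ (α - 2)) ᵥ* Z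

theorem saDiv_eq_bregmanDiv :
    saDiv Z α = bregmanDiv (saPotential Z α) (fun q => dotProductBilin ℝ ℝ (saGradient Z α q)) := by
  ext p q
  simp only [saDiv, bregmanDiv, saPotential, saGradient, dotProductBilin_apply_apply,
    add_dotProduct, smul_dotProduct, ← dotProduct_mulVec]
  simp only [dotProduct, Pi.sub_apply, smul_eq_mul, mul_sum, ← sum_sub_distrib,
    ← sum_add_distrib]
  refine sum_congr rfl fun i _ => ?_
  ring

theorem sum_mul_saDiv_eq_add {ι : Type*} {s : Finset ι} {w : ι → ℝ}
    (hw : ∑ a ∈ s, w a ≠ 0) (p : ι → Fin n → ℝ) (q : Fin n → ℝ) :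
    ∑ a ∈ s, w a * saDiv Z α (p a) q
      = (∑ a ∈ s, w a) * saDiv Z α ((∑ a ∈ s, w a)⁻¹ • ∑ a ∈ s, w a • p a) q
        + (∑ a ∈ s, w a) * ∑ a ∈ s, (w a / ∑ b ∈ s, w b)
            * saDiv Z α (p a) ((∑ b ∈ s, w b)⁻¹ • ∑ b ∈ s, w b • p b) := by
  rw [saDiv_eq_bregmanDiv, sum_mul_bregmanDiv_eq_add _ _ (smul_inv_smul₀ hw _), mul_sum]
  congr 1
  refine sum_congr rfl fun a _ => ?_
  field_simp

end StructureAware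

theorem bregman_information_decomposition_general {n : ℕ} (Z : Matrix (Fin n) (Fin n) ℝ)
    (α : ℝ)
    (m k : ℕ) (w : Fin m → ℝ) (hw : ∀ a, 0 < w a)
    (p : Fin m → Fin n → ℝ)
    (c : Fin m → Fin k) :
    ∑ a, w a * saDiv Z α (p a) (∑ b, w b • p b)
      = (∑ cl,
            (∑ a ∈ Finset.univ.filter (fun a => c a = cl), w a)
              * saDiv Z α
                  ((∑ a ∈ Finset.univ.filter (fun a => c a = cl), w a)⁻¹ •
                    ∑ a ∈ Finset.univ.filter (fun a => c a = cl), w a • p a)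
                  (∑ b, w b • p b))
        + ∑ cl,
            (∑ a ∈ Finset.univ.filter (fun a => c a = cl), w a)
              * ∑ a ∈ Finset.univ.filter (fun a => c a = cl),
                  (w a / ∑ b ∈ Finset.univ.filter (fun b => c b = cl), w b)
                    * saDiv Z α (p a)
                        ((∑ b ∈ Finset.univ.filter (fun b => c b = cl), w b)⁻¹ •
                          ∑ b ∈ Finset.univ.filter (fun b => c b = cl), w b • p b) := by
  rw [← sum_fiberwise univ c, ← sum_add_distrib]
  refine sum_congr rfl fun cl _ => ?_
  obtain hempty | hne := (univ.filter fun a => c a = cl).eq_empty_or_nonempty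
  · simp only [hempty, sum_empty, zero_mul, add_zero]
  · exact sum_mul_saDiv_eq_add Z α (sum_pos (fun a _ => hw a) hne).ne' p _

/-- the total Bregman information decomposes as the between-cluster
plus the within-cluster Bregman informations, for any partition of the index set
(encoded by a surjective cluster assignment `c`). -/
theorem bregman_information_decomposition {n : ℕ} (Z : Matrix (Fin n) (Fin n) ℝ)
    (hZ : IsSimilarityMatrix Z) (hpd : IsPosDefMat Z) (α : ℝ) (hα : 2 ≤ α)
    (m k : ℕ) (hm : 1 ≤ m) (w : Fin m → ℝ) (hw1 : (∑ a, w a) = 1) (hw : ∀ a, 0 < w a)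
    (p : Fin m → Fin n → ℝ) (hp : ∀ a, p a ∈ simplexInterior n)
    (c : Fin m → Fin k) (hc : Function.Surjective c) :
    ∑ a, w a * saDiv Z α (p a) (∑ b, w b • p b)
      = (∑ cl,
            (∑ a ∈ Finset.univ.filter (fun a => c a = cl), w a)
              * saDiv Z α
                  ((∑ a ∈ Finset.univ.filter (fun a => c a = cl), w a)⁻¹ •
                    ∑ a ∈ Finset.univ.filter (fun a => c a = cl), w a • p a)
                  (∑ b, w b • p b))
        + ∑ cl,
            (∑ a ∈ Finset.univ.filter (fun a => c a = cl), w a)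
              * ∑ a ∈ Finset.univ.filter (fun a => c a = cl),
                  (w a / ∑ b ∈ Finset.univ.filter (fun b => c b = cl), w b)
                    * saDiv Z α (p a)
                        ((∑ b ∈ Finset.univ.filter (fun b => c b = cl), w b)⁻¹ •
                          ∑ b ∈ Finset.univ.filter (fun b => c b = cl), w b • p b) :=
  bregman_information_decomposition_general Z α m k w hw p c
end

section
/- Let Z₁ and Z₂ be n×n similarity matrices with Z₁ ≥ Z₂ entrywise, let α ≥ 0 be real, and let p ∈ Δ_n°. Then increasing similarity decreases entropy: H_α^{Z₁}(p) ≤ H_α^{Z₂}(p). -/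
open Matrix Finset

/-- increasing similarity decreases entropy. -/
theorem entropy_antitone_in_similarity {n : ℕ} (Z₁ Z₂ : Matrix (Fin n) (Fin n) ℝ)
    (hZ₁ : IsSimilarityMatrix Z₁) (hZ₂ : IsSimilarityMatrix Z₂)
    (hle : ∀ i j, Z₂ i j ≤ Z₁ i j) (α : ℝ) (hα : 0 ≤ α)
    (p : Fin n → ℝ) (hp : p ∈ simplexInterior n) :
    Hent Z₁ α p ≤ Hent Z₂ α p := by
  obtain ⟨hsum, hpos⟩ := hp
  have hb : ∀ i, 0 < Z₂.mulVec p i := by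
    intro i
    have h1 : Z₂ i i * p i ≤ ∑ j, Z₂ i j * p j :=
      Finset.single_le_sum (fun j _ => mul_nonneg (hZ₂.1 i j).1 (hpos j).le) (Finset.mem_univ i)
    have : 0 < Z₂ i i * p i := by rw [hZ₂.2.2 i]; simpa using hpos i
    exact lt_of_lt_of_le this h1
  have hba : ∀ i, Z₂.mulVec p i ≤ Z₁.mulVec p i := by
    intro i
    simp only [Matrix.mulVec, dotProduct]
    exact Finset.sum_le_sum fun j _ => mul_le_mul_of_nonneg_right (hle i j) (hpos j).le
  unfold Hent
  by_cases h1 : α = 1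
  · rw [if_pos h1, if_pos h1]
    apply neg_le_neg
    exact Finset.sum_le_sum fun i _ =>
      mul_le_mul_of_nonneg_left (Real.log_le_log (hb i) (hba i)) (hpos i).le
  · rw [if_neg h1, if_neg h1]
    rcases lt_or_gt_of_ne h1 with hlt | hgt
    · -- α < 1 : coefficient negative, exponent nonpositive
      have hc : 1 / (α - 1) ≤ 0 := by
        apply div_nonpos_of_nonneg_of_nonpos zero_le_one
        linarith
      apply mul_le_mul_of_nonpos_left _ hc
      have : ∑ i, p i * Z₁.mulVec p i ^ (α - 1) ≤ ∑ i, p i * Z₂.mulVec p i ^ (α - 1) :=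
        Finset.sum_le_sum fun i _ => mul_le_mul_of_nonneg_left
          (Real.rpow_le_rpow_of_nonpos (hb i) (hba i) (by linarith)) (hpos i).le
      linarith
    · -- α > 1
      have hc : 0 ≤ 1 / (α - 1) := div_nonneg zero_le_one (by linarith)
      apply mul_le_mul_of_nonneg_left _ hc
      have : ∑ i, p i * Z₂.mulVec p i ^ (α - 1) ≤ ∑ i, p i * Z₁.mulVec p i ^ (α - 1) :=
        Finset.sum_le_sum fun i _ => mul_le_mul_of_nonneg_left
          (Real.rpow_le_rpow (hb i).le (hba i) (by linarith)) (hpos i).le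
      linarith
end

section
/- Let Z be an n×n similarity matrix, let α₁ ≥ α₂ ≥ 0 be reals, and let p ∈ Δ_n°. Then increasing the order decreases entropy: H_{α₁}^Z(p) ≤ H_{α₂}^Z(p). -/
open Matrix Finset

/-- Pointwise entropy kernel. -/
noncomputable def Gker (x α : ℝ) : ℝ :=
  if α = 1 then -Real.log x else (1 - x ^ (α - 1)) / (α - 1)

lemma convexOn_exp_mul (c : ℝ) : ConvexOn ℝ Set.univ (fun t : ℝ => Real.exp (t * c)) := by
  refine ⟨convex_univ, fun x _ y _ a b ha hb hab => ?_⟩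
  have := convexOn_exp.2 (Set.mem_univ (x * c)) (Set.mem_univ (y * c)) ha hb hab
  simpa [add_mul, smul_eq_mul, mul_assoc] using this

/-- the extended slope function of `t ↦ exp (t*c)` at `0`, negated -/
noncomputable def sfun (c t : ℝ) : ℝ :=
  if t = 0 then -c else (1 - Real.exp (t * c)) / t

lemma sfun_antitone (c : ℝ) : Antitone (sfun c) := by
  have key : ∀ t : ℝ, t ≠ 0 → sfun c t = -((Real.exp (t * c) - Real.exp (0 * c)) / (t - 0)) := by
    intro t ht
    simp only [sfun, if_neg ht, Real.exp_zero, mul_comm]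
    ring_nf
    rw [Real.exp_zero]
    ring
  intro a b hab
  rcases eq_or_ne a 0 with rfl | ha
  · rcases eq_or_ne b 0 with rfl | hb
    · exact le_refl _
    · have hb' : 0 < b := lt_of_le_of_ne hab (Ne.symm hb)
      have h0 : sfun c 0 = -c := by simp [sfun]
      rw [key b hb, h0, neg_le_neg_iff, zero_mul, Real.exp_zero, sub_zero,
        le_div_iff₀ (by simpa using hb')]
      have := Real.add_one_le_exp (b * c)
      nlinarith
  · rcases eq_or_ne b 0 with rfl | hb
    · have ha' : a < 0 := lt_of_le_of_ne hab ha
      have h0 : sfun c 0 = -c := by simp [sfun]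
      rw [key a ha, h0, neg_le_neg_iff, zero_mul, Real.exp_zero, sub_zero,
        div_le_iff_of_neg (by simpa using ha')]
      have := Real.add_one_le_exp (a * c)
      nlinarith
    · rw [key a ha, key b hb, neg_le_neg_iff]
      exact (convexOn_exp_mul c).secant_mono (Set.mem_univ 0) (Set.mem_univ a)
        (Set.mem_univ b) ha hb hab

lemma Gker_eq_sfun {x : ℝ} (hx : 0 < x) (α : ℝ) : Gker x α = sfun (Real.log x) (α - 1) := by
  rcases eq_or_ne α 1 with rfl | hα
  · simp [Gker, sfun]
  · have h : α - 1 ≠ 0 := sub_ne_zero.mpr hα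
    rw [Gker, sfun, if_neg hα, if_neg h, Real.rpow_def_of_pos hx, mul_comm]

lemma Gker_antitone {x : ℝ} (hx : 0 < x) {α₁ α₂ : ℝ} (h : α₂ ≤ α₁) :
    Gker x α₁ ≤ Gker x α₂ := by
  rw [Gker_eq_sfun hx, Gker_eq_sfun hx]
  exact sfun_antitone _ (by linarith)

lemma Hent_eq_sum {n : ℕ} (Z : Matrix (Fin n) (Fin n) ℝ) (α : ℝ) (p : Fin n → ℝ)
    (hp : (∑ i, p i) = 1) :
    Hent Z α p = ∑ i, p i * Gker (Z.mulVec p i) α := by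
  rcases eq_or_ne α 1 with rfl | hα
  · simp [Hent, Gker, Finset.sum_neg_distrib, mul_neg]
  · rw [Hent, if_neg hα]
    have h1 : (1:ℝ) - ∑ i, p i * (Z.mulVec p i) ^ (α - 1)
        = ∑ i, (p i - p i * (Z.mulVec p i) ^ (α - 1)) := by
      rw [Finset.sum_sub_distrib, hp]
    rw [h1, Finset.mul_sum]
    refine Finset.sum_congr rfl fun i _ => ?_
    rw [Gker, if_neg hα]
    ring

/-- increasing the order `α` decreases entropy. -/
theorem entropy_antitone_in_order {n : ℕ} (Z : Matrix (Fin n) (Fin n) ℝ)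
    (hZ : IsSimilarityMatrix Z) (α₁ α₂ : ℝ) (hα₂ : 0 ≤ α₂) (h12 : α₂ ≤ α₁)
    (p : Fin n → ℝ) (hp : p ∈ simplexInterior n) :
    Hent Z α₁ p ≤ Hent Z α₂ p := by
  obtain ⟨hps, hpp⟩ := hp
  have hpos : ∀ i, 0 < Z.mulVec p i := by
    intro i
    have : Z i i * p i ≤ ∑ j, Z i j * p j := by
      apply Finset.single_le_sum (f := fun j => Z i j * p j)
      · intro j _
        exact mul_nonneg (hZ.1 i j).1 (hpp j).le
      · exact Finset.mem_univ i
    rw [hZ.2.2 i, one_mul] at this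
    exact lt_of_lt_of_le (hpp i) (by simpa [Matrix.mulVec, dotProduct] using this)
  rw [Hent_eq_sum Z α₁ p hps, Hent_eq_sum Z α₂ p hps]
  exact Finset.sum_le_sum fun i _ =>
    mul_le_mul_of_nonneg_left (Gker_antitone (hpos i) h12) (hpp i).le
end

section
/- Fix real α ≥ 0 with α ≠ 1, and for x ∈ (0,1) let g_α(x) = (x^{α−1}·(1 − ln(x^{α−1})) − 1)/(α−1)², which is the derivative with respect to α of the surprise function σ_α(x) = (1 − x^{α−1})/(α−1). Then (i) g_α(x) < 0 for every x ∈ (0,1), and (ii) g_α is strictly increasing on (0,1): for 0 < x₁ < x₂ < 1, g_α(x₁) < g_α(x₂). -/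
/-- The surprise function `σ_α` on `(0,1)`. -/
noncomputable def surprise (α x : ℝ) : ℝ :=
  if α = 1 then -Real.log x else (1 - x ^ (α - 1)) / (α - 1)

/-- The derivative of `α ↦ σ_α(x)` with respect to `α` (for `α ≠ 1`). -/
noncomputable def surpriseDeriv (α x : ℝ) : ℝ :=
  (x ^ (α - 1) * (1 - Real.log (x ^ (α - 1))) - 1) / (α - 1) ^ 2

/-!
Writing `s = (α - 1) log x`, the numerator of `g_α(x)` is `eˢ (1 - s) - 1`, which is negative
for `s ≠ 0` because `1 - s < e⁻ˢ`. Differentiating in `x`, the factors `(α - 1)` cancel against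
the denominator and `g_α' (x) = -log x · x^(α-2)`, which is positive on `(0, 1)`.
-/

open Real Set

lemma exp_mul_one_sub_lt_one {s : ℝ} (hs : s ≠ 0) : exp s * (1 - s) < 1 := by
  have h : 1 - s < exp (-s) := by
    simpa [neg_add_eq_sub] using add_one_lt_exp (neg_ne_zero.mpr hs)
  calc exp s * (1 - s) < exp s * exp (-s) := mul_lt_mul_of_pos_left h (exp_pos s)
    _ = 1 := by rw [← exp_add, add_neg_cancel, exp_zero]

variable {α x : ℝ}

lemma hasDerivAt_surprise (hα1 : α ≠ 1) (hx : 0 < x) :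
    HasDerivAt (fun β => surprise β x) (surpriseDeriv α x) α := by
  have hp : α - 1 ≠ 0 := sub_ne_zero.mpr hα1
  have hquot := ((((hasDerivAt_id' α).sub_const 1).const_rpow hx).const_sub 1).div
    ((hasDerivAt_id' α).sub_const 1) hp
  refine (hquot.congr_deriv ?_).congr_of_eventuallyEq ?_
  · rw [surpriseDeriv, log_rpow hx]
    field_simp
    ring
  · filter_upwards [eventually_ne_nhds hα1] with β hβ
    simp [surprise, hβ]

lemma surpriseDeriv_neg (hα1 : α ≠ 1) (hx : 0 < x) (hx1 : x ≠ 1) : surpriseDeriv α x < 0 := by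
  have hp : α - 1 ≠ 0 := sub_ne_zero.mpr hα1
  have hs : (α - 1) * log x ≠ 0 := mul_ne_zero hp (log_ne_zero_of_pos_of_ne_one hx hx1)
  have hnum := exp_mul_one_sub_lt_one hs
  rw [surpriseDeriv, log_rpow hx, rpow_def_of_pos hx, mul_comm (log x)]
  exact div_neg_of_neg_of_pos (by linarith) (by positivity)

lemma hasDerivAt_surpriseDeriv (hα1 : α ≠ 1) (hx : 0 < x) :
    HasDerivAt (surpriseDeriv α) (-log x * x ^ (α - 2)) x := by
  have h := (((hasDerivAt_rpow_const (p := α - 1) (Or.inl hx.ne')).mul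
    (((hasDerivAt_log hx.ne').const_mul (α - 1)).const_sub 1)).sub_const 1).div_const
      ((α - 1) ^ 2)
  refine (h.congr_deriv ?_).congr_of_eventuallyEq ?_
  · rw [show α - 2 = α - 1 - 1 by ring, rpow_sub_one hx.ne']
    field_simp
    ring
  · filter_upwards [eventually_gt_nhds hx] with y hy
    simp only [surpriseDeriv, log_rpow hy, Pi.mul_apply]

lemma strictMonoOn_surpriseDeriv (hα1 : α ≠ 1) : StrictMonoOn (surpriseDeriv α) (Ioc 0 1) := by
  refine strictMonoOn_of_deriv_pos (convex_Ioc 0 1)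
    (fun y hy => (hasDerivAt_surpriseDeriv hα1 hy.1).continuousAt.continuousWithinAt) ?_
  intro y hy
  rw [interior_Ioc] at hy
  rw [(hasDerivAt_surpriseDeriv hα1 hy.1).deriv]
  exact mul_pos (neg_pos.mpr (log_neg hy.1 hy.2)) (rpow_pos_of_pos hy.1 _)

theorem surpriseDeriv_neg_and_strictMono_general (α : ℝ) (hα1 : α ≠ 1) :
    (∀ x ∈ Set.Ioo (0 : ℝ) 1, HasDerivAt (fun β => surprise β x) (surpriseDeriv α x) α) ∧
    (∀ x ∈ Set.Ioo (0 : ℝ) 1, surpriseDeriv α x < 0) ∧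
    (∀ x₁ x₂ : ℝ, 0 < x₁ → x₁ < x₂ → x₂ < 1 →
      surpriseDeriv α x₁ < surpriseDeriv α x₂) :=
  ⟨fun _ hx => hasDerivAt_surprise hα1 hx.1,
    fun _ hx => surpriseDeriv_neg hα1 hx.1 hx.2.ne,
    fun _ _ h₁ h₁₂ h₂ => strictMonoOn_surpriseDeriv hα1 ⟨h₁, (h₁₂.trans h₂).le⟩
      ⟨h₁.trans h₁₂, h₂.le⟩ h₁₂⟩

/-- for fixed `α ≥ 0`, `α ≠ 1`: `g_α` is the `α`-derivative of the
surprise, is negative on `(0,1)`, and is strictly increasing on `(0,1)`. -/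
theorem surpriseDeriv_neg_and_strictMono (α : ℝ) (hα : 0 ≤ α) (hα1 : α ≠ 1) :
    (∀ x ∈ Set.Ioo (0 : ℝ) 1, HasDerivAt (fun β => surprise β x) (surpriseDeriv α x) α) ∧
    (∀ x ∈ Set.Ioo (0 : ℝ) 1, surpriseDeriv α x < 0) ∧
    (∀ x₁ x₂ : ℝ, 0 < x₁ → x₁ < x₂ → x₂ < 1 →
      surpriseDeriv α x₁ < surpriseDeriv α x₂) :=
  surpriseDeriv_neg_and_strictMono_general α hα1
end

section
/- Let D ∈ ℝ^{n×n} be a symmetric matrix with D_ii = 0 and 0 ≤ D_ij ≤ 1 for all i,j, which is of strictly negative type (v^T D v < 0 for every nonzero v ∈ ℝ^n with Σ_i v_i = 0), and suppose the all-ones vector 1 is an eigenvector of D, i.e. D·1 = λ·1 for some real λ. Then the matrix Z = 1·1^T − D (i.e. Z_ij = 1 − D_ij) is positive definite: x^T Z x > 0 for every nonzero x ∈ ℝ^n. -/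
/-!
Split `x = v + c·𝟙` with `c` the mean of `x`, so that `∑ v = 0`. Because `𝟙` is an eigenvector
of the symmetric matrix `D`, the cross terms of `xᵀDx` vanish, and with `n = card ι` one gets
`xᵀ(𝟙𝟙ᵀ − D)x = c²n(n − λ) − vᵀDv`. Here `λ < n` since every row of `D` has a zero entry and
the others are at most `1`, and `vᵀDv < 0` unless `v = 0`, in which case `c ≠ 0`.
-/

open Matrix Finset

variable {ι : Type*} [Fintype ι]

lemma dotProduct_mulVec_one_sub (D : Matrix ι ι ℝ) (x : ι → ℝ) :
    x ⬝ᵥ (of fun i j => 1 - D i j) *ᵥ x = (∑ i, x i) ^ 2 - x ⬝ᵥ D *ᵥ x := by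
  simp only [dotProduct, mulVec, of_apply, sub_mul, one_mul, sum_sub_distrib, mul_sub,
    mul_sum, sq, sum_mul]
  rw [sum_comm]

lemma dotProduct_const (v : ι → ℝ) (c : ℝ) : v ⬝ᵥ (fun _ => c) = c * ∑ i, v i := by
  simp only [dotProduct, mul_sum, mul_comm]

lemma eigenvalue_of_ones_lt_card [Nonempty ι] {D : Matrix ι ι ℝ} {lam : ℝ}
    (hdiag : ∀ i, D i i = 0) (hle : ∀ i j, D i j ≤ 1)
    (heig : D *ᵥ (fun _ => 1) = fun _ => lam) : lam < Fintype.card ι := by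
  obtain ⟨i⟩ := ‹Nonempty ι›
  calc lam = ∑ j, D i j := by simpa [mulVec, dotProduct] using (congrFun heig i).symm
    _ < ∑ _j : ι, (1 : ℝ) :=
      sum_lt_sum (fun j _ => hle i j) ⟨i, mem_univ i, by simp [hdiag]⟩
    _ = Fintype.card ι := by simp

lemma dotProduct_mulVec_add_const {D : Matrix ι ι ℝ} {lam : ℝ} (hsymm : Dᵀ = D)
    (heig : D *ᵥ (fun _ => 1) = fun _ => lam) {v : ι → ℝ} (hv : ∑ i, v i = 0) (c : ℝ) :
    (v + c • fun _ => 1) ⬝ᵥ D *ᵥ (v + c • fun _ => 1) =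
      v ⬝ᵥ D *ᵥ v + c ^ 2 * Fintype.card ι * lam := by
  have hcross : (fun _ => (1 : ℝ)) ⬝ᵥ D *ᵥ v = 0 := by
    rw [dotProduct_mulVec, ← mulVec_transpose, hsymm, dotProduct_comm, heig, dotProduct_const,
      hv, mul_zero]
  simp only [mulVec_add, mulVec_smul, add_dotProduct, dotProduct_add, smul_dotProduct,
    dotProduct_smul, hcross, heig, dotProduct_const, hv, smul_eq_mul, sum_const, card_univ,
    nsmul_eq_mul, mul_one]
  ring

/-- for a rescaled distance matrix `D` of strictly negative type whose
all-ones vector is an eigenvector, `Z = 𝟙𝟙ᵀ − D` is positive definite. -/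
theorem one_sub_dist_posDef {n : ℕ} (D : Matrix (Fin n) (Fin n) ℝ)
    (hsymm : Dᵀ = D) (hdiag : ∀ i, D i i = 0)
    (hrange : ∀ i j, 0 ≤ D i j ∧ D i j ≤ 1)
    (hneg : ∀ v : Fin n → ℝ, v ≠ 0 → (∑ i, v i) = 0 → v ⬝ᵥ D.mulVec v < 0)
    (lam : ℝ) (heig : D.mulVec (fun _ => 1) = fun _ => lam) :
    ∀ x : Fin n → ℝ, x ≠ 0 →
      0 < x ⬝ᵥ (Matrix.of fun i j => 1 - D i j).mulVec x := by
  intro x hx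
  obtain ⟨i₀, -⟩ := Function.ne_iff.mp hx
  have : Nonempty (Fin n) := ⟨i₀⟩
  have hn : (0 : ℝ) < n := Nat.cast_pos.mpr (Fin.pos i₀)
  set c := (∑ i, x i) / n
  set v := x - c • fun _ => (1 : ℝ)
  have hv : ∑ i, v i = 0 := by
    simp [v, c, sum_sub_distrib, mul_div_cancel₀ _ hn.ne']
  have hx_eq : x = v + c • fun _ => 1 := (sub_add_cancel x _).symm
  have hlam : lam < n := by
    simpa using eigenvalue_of_ones_lt_card hdiag (fun i j => (hrange i j).2) heig
  have hsum : ∑ i, x i = c * n := (div_mul_cancel₀ _ hn.ne').symm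
  have hform : x ⬝ᵥ (of fun i j => 1 - D i j) *ᵥ x = c ^ 2 * n * (n - lam) - v ⬝ᵥ D *ᵥ v := by
    rw [dotProduct_mulVec_one_sub, hsum, hx_eq, dotProduct_mulVec_add_const hsymm heig hv,
      Fintype.card_fin]
    ring
  rw [hform]
  by_cases hv0 : v = 0
  · have hc : c ≠ 0 := by
      rintro hc
      exact hx (by rw [hx_eq, hv0, hc, zero_smul, zero_add])
    simp only [hv0, mulVec_zero, dotProduct_zero, sub_zero]
    exact mul_pos (by positivity) (sub_pos.mpr hlam)
  · linarith [hneg v hv0 hv, mul_nonneg (mul_nonneg (sq_nonneg c) hn.le) (sub_pos.mpr hlam).le]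
end

section
/- Let Z be an n×n symmetric matrix whose entries satisfy 0 ≤ Z_ij ≤ 1 and Z_ii = 1, with Z_ij < 1 for all i ≠ j, and suppose Z satisfies the hierarchy (ultrametric) inequality Z_ik ≥ min(Z_ij, Z_jk) for all i, j, k. Then Z is positive definite: x^T Z x > 0 for every nonzero x ∈ ℝ^n. -/
open Matrix Finset

lemma ultra_aux : ∀ (N : ℕ), ∀ {n : ℕ}, n ≤ N → ∀ (Z : Matrix (Fin n) (Fin n) ℝ),
    (∀ i j, Z i j = Z j i) → (∀ i j, 0 ≤ Z i j) → (∀ i j, Z i j ≤ 1) →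
    (∀ i, Z i i = 1) → (∀ i j, i ≠ j → Z i j < 1) →
    (∀ i j k, min (Z i j) (Z j k) ≤ Z i k) →
    ∀ x : Fin n → ℝ, x ≠ 0 → 0 < ∑ i, ∑ j, x i * Z i j * x j := by
  intro N
  induction N with
  | zero =>
    intro n hn Z _ _ _ _ _ _ x hx
    interval_cases n
    exact absurd (Subsingleton.elim x 0) hx
  | succ N ih =>
    intro n hn Z hsym h0 h1 hdiag hoff hultra x hx
    obtain ⟨i₁, hxi₁⟩ := Function.ne_iff.mp hx
    simp only [Pi.zero_apply] at hxi₁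
    by_cases hpair : ∃ i j : Fin n, i ≠ j
    · obtain ⟨a, b, hab⟩ := hpair
      -- minimal off-diagonal entry
      set P : Finset (Fin n × Fin n) := (univ ×ˢ univ).filter (fun p => p.1 ≠ p.2) with hP
      have hPne : (P.image (fun p => Z p.1 p.2)).Nonempty := by
        refine ⟨Z a b, mem_image.mpr ⟨(a, b), ?_, rfl⟩⟩
        simp [hP, hab]
      set m : ℝ := (P.image (fun p => Z p.1 p.2)).min' hPne with hm
      obtain ⟨v, hvP, hvm⟩ := mem_image.mp ((P.image (fun p => Z p.1 p.2)).min'_mem hPne)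
      rw [← hm] at hvm
      have hvne : v.1 ≠ v.2 := by simpa [hP] using hvP
      have hm0 : 0 ≤ m := by rw [← hvm]; exact h0 v.1 v.2
      have hmlt1 : m < 1 := by rw [← hvm]; exact hoff v.1 v.2 hvne
      have hm_le : ∀ i j, i ≠ j → m ≤ Z i j := by
        intro i j hij
        exact Finset.min'_le _ _ (mem_image.mpr ⟨(i, j), by simp [hP, hij], rfl⟩)
      have hm_all : ∀ i j, m ≤ Z i j := by
        intro i j
        rcases eq_or_ne i j with rfl | hij
        · rw [hdiag]; exact hmlt1.le
        · exact hm_le i j hij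
      have key : ∀ i j k, m < Z i j → m < Z j k → m < Z i k := by
        intro i j k h₁ h₂
        exact lt_of_lt_of_le (lt_min h₁ h₂) (hultra i j k)
      -- classes
      set C : Fin n → Finset (Fin n) := fun i => univ.filter (fun j => m < Z i j) with hC
      have hrefl : ∀ i, i ∈ C i := by intro i; simp [hC, hdiag, hmlt1]
      have hmemC : ∀ i j, j ∈ C i ↔ m < Z i j := by intro i j; simp [hC]
      have hCeq : ∀ i j, m < Z i j → C i = C j := by
        intro i j hij
        have hji : m < Z j i := by rwa [hsym j i]
        ext k
        simp only [hmemC]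
        exact ⟨fun h => key j i k hji h, fun h => key i j k hij h⟩
      have h1m : (0:ℝ) < 1 - m := by linarith
      -- block positivity
      have hblock_pos : ∀ k : Fin n, (∃ i ∈ C k, x i ≠ 0) →
          0 < ∑ i ∈ C k, ∑ j ∈ C k, x i * (Z i j - m) * x j := by
        intro k hex
        obtain ⟨iw, hiw, hxiw⟩ := hex
        set c := C k with hc
        have hZc : ∀ {i j : Fin n}, i ∈ c → j ∈ c → m < Z i j := by
          intro i j hi hj
          exact key i k j (by rw [hsym]; exact (hmemC k i).mp hi) ((hmemC k j).mp hj)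
        have hcard : c.card ≤ N := by
          have hne_univ : c ≠ univ := by
            intro hcu
            have h1m' : m < Z v.1 v.2 :=
              hZc (hcu ▸ mem_univ v.1) (hcu ▸ mem_univ v.2)
            rw [hvm] at h1m'
            exact lt_irrefl m h1m'
          have hlt : c.card < n := by
            have := Finset.card_lt_card (Finset.ssubset_univ_iff.mpr hne_univ)
            simpa using this
          omega
        set d := c.card with hd
        set e := c.orderIsoOfFin rfl with he
        set W : Matrix (Fin d) (Fin d) ℝ := fun p q => (Z (e p) (e q) - m) / (1 - m) with hW
        set y : Fin d → ℝ := fun p => x (e p) with hy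
        have hmemc : ∀ p : Fin d, (e p : Fin n) ∈ c := fun p => (e p).2
        have hWpos := ih hcard W
          (fun p q => by simp only [hW]; rw [hsym])
          (fun p q => by
            have := (hZc (hmemc p) (hmemc q)).le
            exact div_nonneg (by linarith) h1m.le)
          (fun p q => by
            have := h1 (e p) (e q)
            simp only [hW]
            rw [div_le_one h1m]; linarith)
          (fun p => by simp only [hW]; rw [hdiag]; field_simp)
          (fun p q hpq => by
            have hne : (e p : Fin n) ≠ (e q : Fin n) := by
              intro h
              exact hpq (e.injective (Subtype.ext h))
            have := hoff (e p) (e q) hne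
            simp only [hW]
            rw [div_lt_one h1m]; linarith)
          (fun p q r => by
            simp only [hW]
            rw [min_div_div_right h1m.le, min_sub_sub_right]
            have h := hultra (e p) (e q) (e r)
            gcongr)
          y ?hy0
        case hy0 =>
          intro hy0
          apply hxiw
          have h' := congrFun hy0 (e.symm ⟨iw, hiw⟩)
          simp only [hy, Pi.zero_apply, OrderIso.apply_symm_apply] at h'
          exact h'
        -- convert sums
        have hre : ∀ (g : Fin n → ℝ), ∑ i ∈ c, g i = ∑ p : Fin d, g (e p) := by
          intro g
          rw [← Finset.sum_attach c g]
          exact (Fintype.sum_equiv e.toEquiv (fun p => g (e p)) (fun s => g s)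
            (fun p => rfl)).symm
        have hsum : ∑ i ∈ c, ∑ j ∈ c, x i * (Z i j - m) * x j
            = (1 - m) * ∑ p, ∑ q, y p * W p q * y q := by
          rw [hre fun i => ∑ j ∈ c, x i * (Z i j - m) * x j]
          rw [Finset.mul_sum]
          refine Finset.sum_congr rfl fun p _ => ?_
          rw [hre fun j => x (e p) * (Z (e p) j - m) * x j, Finset.mul_sum]
          refine Finset.sum_congr rfl fun q _ => ?_
          simp only [hy, hW]
          field_simp
        rw [hsum]
        exact mul_pos h1m hWpos
      -- per-class nonnegativity
      have hblock_nonneg : ∀ k : Fin n,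
          0 ≤ ∑ i ∈ C k, ∑ j ∈ C k, x i * (Z i j - m) * x j := by
        intro k
        by_cases hex : ∃ i ∈ C k, x i ≠ 0
        · exact (hblock_pos k hex).le
        · push_neg at hex
          have : ∑ i ∈ C k, ∑ j ∈ C k, x i * (Z i j - m) * x j = 0 := by
            refine Finset.sum_eq_zero fun i hi => ?_
            refine Finset.sum_eq_zero fun j hj => ?_
            rw [hex i hi]; ring
          rw [this]
      -- split the quadratic form
      have hA : ∑ i, ∑ j, x i * m * x j = m * ((∑ i, x i) * (∑ i, x i)) := by
        rw [Finset.sum_mul_sum, Finset.mul_sum]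
        refine Finset.sum_congr rfl fun i _ => ?_
        rw [Finset.mul_sum]
        exact Finset.sum_congr rfl fun j _ => by ring
      have hB : ∑ i, ∑ j, x i * (Z i j - m) * x j
          = ∑ c' ∈ univ.image C, ∑ i ∈ c', ∑ j ∈ c', x i * (Z i j - m) * x j := by
        rw [← Finset.sum_product']
        have hQ : ∑ p ∈ univ ×ˢ univ, x p.1 * (Z p.1 p.2 - m) * x p.2
            = ∑ p ∈ (univ ×ˢ univ).filter (fun p => m < Z p.1 p.2),
                x p.1 * (Z p.1 p.2 - m) * x p.2 := by
          symm
          apply Finset.sum_subset (Finset.filter_subset _ _)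
          intro p hp hpn
          have hnlt : ¬ m < Z p.1 p.2 := by
            intro h
            exact hpn (Finset.mem_filter.mpr ⟨hp, h⟩)
          have : Z p.1 p.2 = m := le_antisymm (not_lt.mp hnlt) (hm_all _ _)
          rw [this]; ring
        have hpart : (univ ×ˢ univ).filter (fun p : Fin n × Fin n => m < Z p.1 p.2)
            = (univ.image C).biUnion (fun c' => c' ×ˢ c') := by
          ext p
          simp only [Finset.mem_filter, Finset.mem_product, Finset.mem_univ, true_and,
            Finset.mem_biUnion, Finset.mem_image]
          constructor
          · intro h
            exact ⟨C p.1, ⟨p.1, rfl⟩, hrefl p.1, (hmemC _ _).mpr h⟩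
          · rintro ⟨c', ⟨k, rfl⟩, hp1, hp2⟩
            exact key p.1 k p.2 (by rw [hsym]; exact (hmemC _ _).mp hp1) ((hmemC _ _).mp hp2)
        have hdisj : Set.PairwiseDisjoint ↑(univ.image C)
            (fun c' : Finset (Fin n) => c' ×ˢ c') := by
          intro c1 hc1 c2 hc2 hne
          simp only [Finset.coe_image, Set.mem_image, Finset.mem_coe] at hc1 hc2
          obtain ⟨k1, -, rfl⟩ := hc1
          obtain ⟨k2, -, rfl⟩ := hc2
          refine Finset.disjoint_left.mpr ?_
          intro p hp1 hp2
          obtain ⟨ha1, -⟩ := Finset.mem_product.mp hp1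
          obtain ⟨ha2, -⟩ := Finset.mem_product.mp hp2
          exact hne (by
            rw [hCeq k1 p.1 ((hmemC _ _).mp ha1), hCeq k2 p.1 ((hmemC _ _).mp ha2)])
        rw [hQ, hpart, Finset.sum_biUnion hdisj]
        exact Finset.sum_congr rfl fun c' _ => (Finset.sum_product ..)
      have hsplit : ∑ i, ∑ j, x i * Z i j * x j
          = m * ((∑ i, x i) * (∑ i, x i))
            + ∑ c' ∈ univ.image C, ∑ i ∈ c', ∑ j ∈ c', x i * (Z i j - m) * x j := by
        rw [← hA, ← hB, ← Finset.sum_add_distrib]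
        refine Finset.sum_congr rfl fun i _ => ?_
        rw [← Finset.sum_add_distrib]
        exact Finset.sum_congr rfl fun j _ => by ring
      rw [hsplit]
      have hBpos : 0 < ∑ c' ∈ univ.image C, ∑ i ∈ c', ∑ j ∈ c', x i * (Z i j - m) * x j := by
        refine Finset.sum_pos' ?_ ⟨C i₁, Finset.mem_image.mpr ⟨i₁, mem_univ _, rfl⟩, ?_⟩
        · intro c' hc'
          obtain ⟨k, -, rfl⟩ := Finset.mem_image.mp hc'
          exact hblock_nonneg k
        · exact hblock_pos i₁ ⟨i₁, hrefl i₁, hxi₁⟩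
      nlinarith [mul_self_nonneg (∑ i, x i), mul_nonneg hm0 (mul_self_nonneg (∑ i, x i))]
    · push_neg at hpair
      have huniv : (univ : Finset (Fin n)) = {i₁} := by
        ext j; simp [hpair j i₁]
      rw [huniv]
      simp only [Finset.sum_singleton, hdiag]
      have hp := mul_self_pos.mpr hxi₁
      nlinarith [hp]

/-- a symmetric ultrametric-type similarity matrix with unit diagonal
and strictly smaller off-diagonal entries is positive definite. -/
theorem ultrametric_similarity_posDef {n : ℕ} (Z : Matrix (Fin n) (Fin n) ℝ)
    (hsymm : Zᵀ = Z) (hrange : ∀ i j, 0 ≤ Z i j ∧ Z i j ≤ 1)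
    (hdiag : ∀ i, Z i i = 1) (hoff : ∀ i j, i ≠ j → Z i j < 1)
    (hultra : ∀ i j k, min (Z i j) (Z j k) ≤ Z i k) :
    ∀ x : Fin n → ℝ, x ≠ 0 → 0 < x ⬝ᵥ Z.mulVec x := by
  intro x hx
  have hsym : ∀ i j, Z i j = Z j i := by
    intro i j
    conv_lhs => rw [← hsymm]
    rfl
  have h := ultra_aux n le_rfl Z hsym (fun i j => (hrange i j).1) (fun i j => (hrange i j).2)
    hdiag hoff hultra x hx
  have heq : x ⬝ᵥ Z.mulVec x = ∑ i, ∑ j, x i * Z i j * x j := by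
    simp only [dotProduct, mulVec, Finset.mul_sum]
    exact Finset.sum_congr rfl fun i _ => Finset.sum_congr rfl fun j _ => by ring
  rw [heq]
  exact h
end
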